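/- arXiv:1310.2958 — 2 statements merged into one kernel-verified Lean document; each statement's English description precedes it below -/
import Mathlib

section
/- Let f ∈ 𝔽_q[x] be a single-variable polynomial of degree d > 0 over the finite field 𝔽_q. If the value set V_f = f(𝔽_q) satisfies |V_f| < q (i.e., f is not a permutation polynomial), then |V_f| ≤ q − (q−1)/d (an inequality of real numbers). -/
/-!
Let `s = q - |V_f|` be the number of missing values and `G = ∏_{a ∈ 𝔽_q} (X - f(a))`.
For `k ≥ 1` with `k d < q - 1` the elementary symmetric function `e_k` of the values `f(a)`
vanishes: `c ↦ e_k(f(a c) : a ∈ 𝔽_q)` is a polynomial in `c` of degree `≤ k d` that is constant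
on `𝔽_q^×`, hence constant, and at `c = 0` it equals `C(q, k) f(0)^k = 0`.
So if `s d < q - 1`, then `G - (X^q - X)` has degree `< q - s`; it vanishes on `V_f` but not at
a missing value, whence `|V_f| < q - s`, a contradiction.
-/

open Polynomial Finset

namespace Multiset

theorem map_esymm {R S : Type*} [CommSemiring R] [CommSemiring S] (φ : R →+* S)
    (s : Multiset R) (k : ℕ) : φ (s.esymm k) = (s.map φ).esymm k := by
  simp only [esymm, map_multiset_sum, map_multiset_prod, powersetCard_map, map_map,
    Function.comp_def]

theorem esymm_replicate {R : Type*} [CommSemiring R] (n k : ℕ) (a : R) :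
    (replicate n a).esymm k = n.choose k * a ^ k := by
  have hprod : ∀ t ∈ (replicate n a).powersetCard k, t.prod = a ^ k := fun t ht => by
    obtain ⟨hle, hcard⟩ := mem_powersetCard.mp ht
    rw [eq_replicate_of_mem fun b hb => eq_of_mem_replicate (mem_of_le hle hb), prod_replicate,
      hcard]
  rw [esymm, map_congr rfl hprod, map_const', sum_replicate, card_powersetCard, card_replicate,
    nsmul_eq_mul]

theorem degree_prod_X_sub_C_sub_X_pow_lt {R : Type*} [CommRing R] [Nontrivial R]
    (s : Multiset R) {m : ℕ} (h : ∀ j, 0 < j → j ≤ m → s.esymm j = 0) :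
    ((s.map fun t => X - C t).prod - X ^ card s).degree < ↑(card s - m) := by
  rw [degree_lt_iff_coeff_zero]
  intro N hN
  rw [coeff_sub, coeff_X_pow]
  rcases lt_or_ge (card s) N with hlt | hle
  · rw [coeff_eq_zero_of_natDegree_lt (by rwa [natDegree_multiset_prod_X_sub_C_eq_card]),
      if_neg hlt.ne', sub_zero]
  · rw [prod_X_sub_C_coeff s hle]
    rcases hle.eq_or_lt with rfl | hNlt
    · simp [esymm, powersetCard_zero_left]
    · rw [h _ (by omega) (by omega), if_neg hNlt.ne]
      simp

end Multiset

namespace Polynomial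

theorem natDegree_esymm_le {R : Type*} [CommSemiring R] (s : Multiset R[X]) (k : ℕ) {n : ℕ}
    (h : ∀ p ∈ s, p.natDegree ≤ n) : (s.esymm k).natDegree ≤ k * n := by
  refine Multiset.sum_induction (fun p : R[X] => p.natDegree ≤ k * n) _
    (fun p q hp hq => natDegree_add_le_of_degree_le hp hq) (by simp) ?_
  simp only [Multiset.mem_map, Multiset.mem_powersetCard]
  rintro _ ⟨t, ⟨hts, rfl⟩, rfl⟩
  refine (natDegree_multiset_prod_le _).trans ?_
  simpa using Multiset.sum_le_card_nsmul (t.map natDegree) n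
    (by simpa using fun p hp => h p (Multiset.mem_of_le hts hp))

end Polynomial

namespace FiniteField

variable {F : Type*} [Field F] [Fintype F]

theorem cast_card_choose_eq_zero {k : ℕ} (hk : 0 < k) (hkq : k < Fintype.card F) :
    ((Fintype.card F).choose k : F) = 0 := by
  obtain ⟨n, hp, hcard⟩ := FiniteField.card F (ringChar F)
  rw [CharP.cast_eq_zero_iff F (ringChar F), hcard]
  exact hp.dvd_choose_pow hk.ne' (hcard ▸ hkq.ne)

theorem eval_zero_eq_eval_one_of_natDegree_lt {P : F[X]}
    (hdeg : P.natDegree < Fintype.card F - 1) (hP : ∀ c ≠ 0, P.eval c = P.eval 1) :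
    P.eval 0 = P.eval 1 := by
  classical
  suffices P = C (P.eval 1) by rw [this, eval_C, eval_C]
  refine eq_of_degree_sub_lt_of_eval_finset_eq (univ.erase 0) ?_ fun c hc => ?_
  · rw [card_erase_of_mem (mem_univ 0), card_univ]
    refine degree_le_natDegree.trans_lt ?_
    rw [natDegree_sub_C]
    exact_mod_cast hdeg
  · rw [eval_C, hP c (ne_of_mem_erase hc)]

theorem map_univ_val_mul_right {α : Type*} {c : F} (hc : c ≠ 0) (g : F → α) :
    (univ.val.map fun a => g (a * c)) = univ.val.map g := by
  rw [← Function.comp_def, ← Multiset.map_map]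
  congr 1
  simpa [Finset.map] using congrArg Finset.val (map_univ_equiv (Equiv.mulRight₀ c hc))

theorem esymm_map_eval_univ_eq_zero (g : F[X]) {k : ℕ} (hk : 0 < k) (hkq : k < Fintype.card F)
    (hkd : k * g.natDegree < Fintype.card F - 1) :
    (univ.val.map g.eval).esymm k = 0 := by
  set E : F[X] := (univ.val.map fun a => g.comp (C a * X)).esymm k
  have hE : ∀ c, E.eval c = (univ.val.map fun a => g.eval (a * c)).esymm k := fun c => by
    rw [← coe_evalRingHom, Multiset.map_esymm, Multiset.map_map]
    simp [Function.comp_def, eval_comp]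
  have hdeg : E.natDegree ≤ k * g.natDegree := natDegree_esymm_le _ _ fun p hp => by
    obtain ⟨a, -, rfl⟩ := Multiset.mem_map.mp hp
    refine natDegree_comp_le.trans ((Nat.mul_le_mul_left _ ?_).trans_eq (mul_one _))
    exact (natDegree_C_mul_le a X).trans natDegree_X_le
  have hconst : ∀ c ≠ 0, E.eval c = E.eval 1 := fun c hc => by
    simp only [hE, mul_one]
    exact congrArg (Multiset.esymm · k) (map_univ_val_mul_right hc (eval · g))
  have h1 : E.eval 1 = (univ.val.map g.eval).esymm k := by simp [hE]
  rw [← h1, ← eval_zero_eq_eval_one_of_natDegree_lt (hdeg.trans_lt hkd) hconst, hE]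
  simp [Multiset.map_const', Multiset.esymm_replicate, cast_card_choose_eq_zero hk hkq]

theorem card_image_eval_add_lt [DecidableEq F] (f : F[X]) (hd : 0 < f.natDegree) {w : F}
    (hw : ∀ a, f.eval a ≠ w) {m : ℕ} (hmd : m * f.natDegree < Fintype.card F - 1) :
    #(univ.image f.eval) + m < Fintype.card F := by
  set q := Fintype.card F
  set M := univ.val.map f.eval
  have hM : Multiset.card M = q := by simp [M, q]
  have hm : m < q - 1 := (Nat.le_mul_of_pos_right m hd).trans_lt hmd
  have hesymm : ∀ j, 0 < j → j ≤ m → M.esymm j = 0 := fun j hj hjm =>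
    esymm_map_eval_univ_eq_zero f hj (by omega) ((Nat.mul_le_mul_right _ hjm).trans_lt hmd)
  set G : F[X] := (M.map fun t => X - C t).prod
  have hG : ∀ x, G.eval x = 0 ↔ ∃ a, x = f.eval a := fun x => by
    simp [G, M, eval_prod, prod_eq_zero_iff, sub_eq_zero]
  set P : F[X] := G - (X ^ q - X)
  have hPdeg : P.degree < ↑(q - m) := by
    have hGq := M.degree_prod_X_sub_C_sub_X_pow_lt hesymm
    rw [hM] at hGq
    rw [show P = (G - X ^ q) + X by ring]
    refine (degree_add_le _ _).trans_lt (max_lt hGq ?_)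
    rw [degree_X]
    exact_mod_cast (by omega : 1 < q - m)
  have hPeval : ∀ x, P.eval x = G.eval x := fun x => by
    simp [P, q, FiniteField.pow_card]
  have hP0 : P ≠ 0 := fun h => by
    obtain ⟨a, ha⟩ := (hG w).mp (by rw [← hPeval, h, eval_zero])
    exact hw a ha.symm
  by_contra hcard
  refine hP0 (eq_zero_of_degree_lt_of_eval_finset_eq_zero (univ.image f.eval) ?_ ?_)
  · exact hPdeg.trans_le (by exact_mod_cast (by omega))
  · simpa [hPeval, hG] using fun a => ⟨a, rfl⟩

end FiniteField

/-- **Theorem (Wan's bound, Theorem 3.1).** Let `f ∈ 𝔽_q[x]` be a single-variable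
polynomial of degree `d > 0`. If the value set `V_f = f(𝔽_q)` satisfies `|V_f| < q`,
then `|V_f| ≤ q - (q-1)/d`. -/
theorem value_set_le_sub_div (q : ℕ) (F : Type) [Field F] [Fintype F]
    (hF : Fintype.card F = q)
    (f : Polynomial F) (d : ℕ) (hdeg : f.natDegree = d) (hd : 0 < d)
    (V : Set F) (hV : V = Set.range fun a => f.eval a)
    (hlt : V.ncard < q) :
    (V.ncard : ℝ) ≤ q - (q - 1) / d := by
  classical
  subst hV hdeg
  set r := #(univ.image f.eval)
  have hr : (Set.range fun a => f.eval a).ncard = r := by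
    rw [← Set.image_univ, ← coe_univ, ← coe_image, Set.ncard_coe_finset]
  rw [hr] at hlt ⊢
  obtain ⟨w, -, hw⟩ := exists_mem_notMem_of_card_lt_card (s := univ.image f.eval) (t := univ)
    (by rwa [card_univ, hF])
  have key : q - 1 ≤ (q - r) * f.natDegree := by
    by_contra! h
    have := FiniteField.card_image_eval_add_lt f hd (w := w) (by simpa using hw) (hF ▸ h)
    omega
  have hq : 1 ≤ q := hF ▸ Fintype.card_pos
  rw [le_sub_comm, div_le_iff₀ (by exact_mod_cast hd), ← Nat.cast_one, ← Nat.cast_sub hq,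
    ← Nat.cast_sub hlt.le, ← Nat.cast_mul]
  exact_mod_cast key
end

section
/- Let q be a prime power, n ≥ 1, let f = (f₁,…,fₙ) be a polynomial vector with each fᵢ ∈ 𝔽_q[x₁,…,xₙ], let K be a field extension of 𝔽_q with [K : 𝔽_q] = n (so |K| = qⁿ), fix an 𝔽_q-basis e₁,…,eₙ of K, and set g = f₁e₁ + ⋯ + fₙeₙ ∈ K[x₁,…,xₙ]. Let ĝ ∈ W(K)[x₁,…,xₙ] be the lift of g obtained by applying the Teichmüller map τ : K → W(K) to each coefficient. Then for every positive integer k with k < μ_f·(q−1) and k < q, the sum ∑_{(x₁,…,xₙ) ∈ 𝔽_qⁿ} ĝ(τ(x₁),…,τ(xₙ))^k is divisible by p·k in W(K), where each xᵢ ∈ 𝔽_q is regarded as an element of K. Consequently, the least positive integer k for which this divisibility fails (when it exists) satisfies U(g) ≥ min{μ_f·(q−1), q}. -/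
open MvPolynomial Pointwise ENNReal

/-! Raising `ĝ(τ(x))` to the `k`-th power, expanding, and summing over `x ∈ 𝔽_qⁿ` factors each
term into one-variable power sums `∑_{y ∈ 𝔽_q} τ(y)^m`; these equal `q` for `m = 0` and vanish
unless `q - 1 ∣ m`. A term escaping both cases consists of `k` exponent vectors of `g` whose
column sums are positive multiples of `q - 1`; their average lies in `Δ`, so `(k/(q-1))Δ`
contains a positive lattice point, contradicting `k < μ_f (q - 1)`. Hence `q` divides the sum,
and since `k < q`, `p k` divides `q` up to a unit of `W(K)`. -/

open Finset

def powerSum {A R : Type*} [Fintype A] [CommSemiring R] (w : A → R) (m : ℕ) : R :=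
  ∑ a, w a ^ m

theorem powerSum_zero {A R : Type*} [Fintype A] [CommSemiring R] (w : A → R) :
    powerSum w 0 = Fintype.card A := by
  simp [powerSum]

theorem sum_pow_sum_mul_prod_pow {ι A R : Type*} [Fintype ι] [DecidableEq ι] [Fintype A]
    [CommSemiring R] (s : Finset (ι →₀ ℕ)) (c : (ι →₀ ℕ) → R) (w : A → R) (k : ℕ) :
    ∑ x : ι → A, (∑ v ∈ s, c v * ∏ i, w (x i) ^ v i) ^ k =
      ∑ t ∈ Fintype.piFinset (fun _ : Fin k => s),
        (∏ j, c (t j)) * ∏ i, powerSum w (∑ j, t j i) := by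
  simp_rw [sum_pow', prod_mul_distrib]
  rw [sum_comm]
  refine sum_congr rfl fun t _ => ?_
  rw [← mul_sum]
  congr 1
  simp_rw [prod_comm (s := univ (α := Fin k)), prod_pow_eq_pow_sum, powerSum]
  exact (Fintype.prod_sum fun i a => w a ^ ∑ j, t j i).symm

namespace FiniteField

variable {F R : Type*} [Field F] [Fintype F] [CommRing R] [IsDomain R]

/-- Multiplication by a generator `ζ` of `Fˣ` permutes `F`, so the sum is fixed by the factor
`χ ζ ^ m`, which is `≠ 1` because `ζ` has order `card F - 1`. -/
theorem powerSum_eq_zero (χ : F →* R) (hχ : Function.Injective χ) {m : ℕ}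
    (hm : ¬ Fintype.card F - 1 ∣ m) : powerSum χ m = 0 := by
  classical
  obtain ⟨ζ, hζ⟩ := IsCyclic.exists_generator (α := Fˣ)
  have hζm : χ ζ ^ m ≠ 1 := by
    rw [← map_pow, ← map_one χ, hχ.ne_iff]
    intro h
    apply hm
    rw [← Fintype.card_units, ← Nat.card_eq_fintype_card,
      ← orderOf_eq_card_of_forall_mem_zpowers hζ]
    exact orderOf_dvd_of_pow_eq_one (Units.ext (by simpa using h))
  have hshift : χ ζ ^ m * powerSum χ m = powerSum χ m := by
    simp_rw [powerSum, mul_sum, ← mul_pow, ← map_mul]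
    exact Fintype.sum_bijective _ (mulLeft_bijective₀ _ ζ.ne_zero) _ _ fun _ => rfl
  exact (mul_left_eq_self₀.1 hshift).resolve_left hζm

theorem natCast_card_dvd_powerSum (χ : F →* R) (hχ : Function.Injective χ) {m : ℕ}
    (hm : 0 < m → ¬ Fintype.card F - 1 ∣ m) : (Fintype.card F : R) ∣ powerSum χ m := by
  rcases Nat.eq_zero_or_pos m with rfl | hpos
  · rw [powerSum_zero]
  · rw [powerSum_eq_zero χ hχ (hm hpos)]
    exact dvd_zero _

end FiniteField

theorem WittVector.isUnit_natCast_of_not_dvd {p : ℕ} [Fact p.Prime] {K : Type*} [Field K]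
    [CharP K p] {u : ℕ} (hu : ¬ p ∣ u) : IsUnit (u : WittVector p K) := by
  apply isUnit_of_coeff_zero_ne_zero
  rw [← constantCoeff_apply, map_natCast]
  exact fun h => hu ((CharP.cast_eq_zero_iff K p u).1 h)

/-- Write `k = pˢ u` with `p ∤ u`; then `s < r`, so `p k = pˢ⁺¹ u ∣ pʳ u` and `u` is a unit. -/
theorem natCast_mul_dvd_pow {R : Type*} [CommSemiring R] {p : ℕ} (hp : p.Prime)
    (hunit : ∀ u : ℕ, ¬ p ∣ u → IsUnit (u : R)) {k r : ℕ} (hk : 0 < k) (hkr : k < p ^ r) :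
    ((p * k : ℕ) : R) ∣ ((p ^ r : ℕ) : R) := by
  obtain ⟨s, u, hu, rfl⟩ := Nat.exists_eq_pow_mul_and_not_dvd hk.ne' p hp.ne_one
  have hsr : s + 1 ≤ r := by
    by_contra! h
    have hle : p ^ r ≤ p ^ s * u :=
      (Nat.pow_le_pow_right hp.pos (by omega)).trans (Nat.le_of_dvd hk (Dvd.intro u rfl))
    omega
  rw [← Nat.sub_add_cancel hsr, pow_add, show p * (p ^ s * u) = p ^ (s + 1) * u by ring]
  push_cast
  rw [mul_comm ((p : R) ^ (r - (s + 1)))]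
  exact mul_dvd_mul_left _ (hunit u hu).dvd

theorem MvPolynomial.exists_mem_support_of_mem_support_sum_C_mul_map {σ ι A B : Type*}
    [Fintype ι] [CommSemiring A] [CommSemiring B] (φ : A →+* B) (b : ι → B)
    (f : ι → MvPolynomial σ A) {v : σ →₀ ℕ}
    (hv : v ∈ (∑ i, C (b i) * map φ (f i)).support) : ∃ i, v ∈ (f i).support := by
  by_contra! h
  refine mem_support_iff.1 hv ?_
  rw [coeff_sum]
  refine sum_eq_zero fun i _ => ?_
  rw [coeff_C_mul, coeff_map, notMem_support_iff.1 (h i), map_zero, mul_zero]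

/-- The paper's `μ_f` when `Δ` is the Newton polytope of `f`. -/
noncomputable def latticeThreshold {ι : Type*} (Δ : Set (ι → ℝ)) : ℝ≥0∞ :=
  sInf {k : ℝ≥0∞ | 0 < k ∧ k ≠ ⊤ ∧
    ∃ v : ι → ℤ, (∀ j, 0 < v j) ∧ (fun j => (v j : ℝ)) ∈ k.toReal • Δ}

theorem latticeThreshold_mul_le {ι : Type*} {Δ : Set (ι → ℝ)} {v : ι → ℕ} (hv : ∀ i, 0 < v i)
    {d k : ℕ} (hd : 0 < d) (hk : 0 < k) (hmem : (fun i => (d * v i : ℝ) / k) ∈ Δ) :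
    latticeThreshold Δ * d ≤ k := by
  have hd' : (d : ℝ≥0∞) ≠ 0 := by exact_mod_cast hd.ne'
  have hle : latticeThreshold Δ ≤ k / d := by
    refine sInf_le ⟨ENNReal.div_pos (by exact_mod_cast hk.ne') (ENNReal.natCast_ne_top d),
      (ENNReal.div_lt_top (ENNReal.natCast_ne_top k) hd').ne, fun i => v i,
      fun i => Int.natCast_pos.2 (hv i), Set.mem_smul_set.2 ⟨_, hmem, ?_⟩⟩
    funext i
    rw [ENNReal.toReal_div, ENNReal.toReal_natCast, ENNReal.toReal_natCast]
    simp only [Pi.smul_apply, smul_eq_mul, Int.cast_natCast]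
    field_simp
  calc latticeThreshold Δ * d ≤ k / d * d := by gcongr
    _ = k := ENNReal.div_mul_cancel hd' (ENNReal.natCast_ne_top d)

/-- The lattice point is the column sum `∑ⱼ tⱼ` divided by `d`; the average `(∑ⱼ tⱼ) / k` lies
in the convex set `Δ`. -/
theorem latticeThreshold_mul_le_of_forall_mem {ι : Type*} {Δ : Set (ι → ℝ)} (hΔ : Convex ℝ Δ)
    {k d : ℕ} (hk : 0 < k) (hd : 0 < d) (t : Fin k → ι →₀ ℕ)
    (ht : ∀ j, (fun i => (t j i : ℝ)) ∈ Δ) (hpos : ∀ i, 0 < ∑ j, t j i)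
    (hdvd : ∀ i, d ∣ ∑ j, t j i) : latticeThreshold Δ * d ≤ k := by
  refine latticeThreshold_mul_le (v := fun i => (∑ j, t j i) / d)
    (fun i => Nat.div_pos (Nat.le_of_dvd (hpos i) (hdvd i)) hd) hd hk ?_
  have hk' : (k : ℝ) ≠ 0 := by exact_mod_cast hk.ne'
  convert hΔ.sum_mem (t := univ) (w := fun _ => (k : ℝ)⁻¹) (fun _ _ => by positivity)
    (by simp [hk']) (fun j _ => ht j) using 1
  funext i
  simp only [Finset.sum_apply, Pi.smul_apply, smul_eq_mul, ← mul_sum]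
  rw [← Nat.cast_mul, Nat.mul_div_cancel' (hdvd i), Nat.cast_sum]
  field_simp

theorem U_g_ge_min_polytope_general (p r q : ℕ) [Fact p.Prime] (hq : q = p ^ r)
    (F : Type) [Field F] [Fintype F] (hF : Fintype.card F = q)
    (n : ℕ)
    (K : Type) [Field K] [CharP K p] [Algebra F K]
    (b : Module.Basis (Fin n) F K)
    (f : Fin n → MvPolynomial (Fin n) F)
    (g : MvPolynomial (Fin n) K)
    (hg : g = ∑ i, MvPolynomial.C (b i) * MvPolynomial.map (algebraMap F K) (f i))
    (Δ : Set (Fin n → ℝ))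
    (hΔ : Δ = convexHull ℝ
      ({0} ∪ ⋃ i, (fun v : Fin n →₀ ℕ => fun j => (v j : ℝ)) '' ((f i).support : Set (Fin n →₀ ℕ))))
    (μ : ℝ≥0∞)
    (hμ : μ = sInf {k : ℝ≥0∞ | 0 < k ∧ k ≠ ⊤ ∧
      ∃ v : Fin n → ℤ, (∀ j, 0 < v j) ∧ (fun j => (v j : ℝ)) ∈ k.toReal • Δ})
    (T : (Fin n → F) → WittVector p K)
    (hT : ∀ x, T x = ∑ v ∈ g.support,
      WittVector.teichmuller p (MvPolynomial.coeff v g) *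
        ∏ i, WittVector.teichmuller p (algebraMap F K (x i)) ^ v i) :
    (∀ k : ℕ, 0 < k → (k : ℝ≥0∞) < μ * ((q : ℝ≥0∞) - 1) → k < q →
      ((p * k : ℕ) : WittVector p K) ∣ ∑ x : Fin n → F, T x ^ k) ∧
    (∀ k : ℕ, 0 < k → ¬ ((p * k : ℕ) : WittVector p K) ∣ (∑ x : Fin n → F, T x ^ k) →
      min (μ * ((q : ℝ≥0∞) - 1)) (q : ℝ≥0∞) ≤ (k : ℝ≥0∞)) := by
  classical
  change μ = latticeThreshold Δ at hμ
  let χ : F →* WittVector p K := (WittVector.teichmuller p).comp (algebraMap F K : F →* K)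
  have hχ : Function.Injective χ := fun y z h => (algebraMap F K).injective <| by
    simpa [χ] using congrArg (WittVector.coeff · 0) h
  have hexponent : ∀ v ∈ g.support, (fun i => (v i : ℝ)) ∈ Δ := fun v hv => by
    obtain ⟨i, hi⟩ := exists_mem_support_of_mem_support_sum_C_mul_map _ _ _ (hg ▸ hv)
    exact hΔ ▸ subset_convexHull ℝ _ (Or.inr (Set.mem_iUnion.2 ⟨i, v, hi, rfl⟩))
  have hdvd : ∀ k : ℕ, 0 < k → (k : ℝ≥0∞) < μ * ((q : ℝ≥0∞) - 1) → k < q →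
      ((p * k : ℕ) : WittVector p K) ∣ ∑ x : Fin n → F, T x ^ k := by
    intro k hk hkμ hkq
    refine (hq ▸ natCast_mul_dvd_pow Fact.out
      (fun _ => WittVector.isUnit_natCast_of_not_dvd) hk (hq ▸ hkq)).trans ?_
    have hexpand : ∑ x, T x ^ k = ∑ t ∈ Fintype.piFinset (fun _ : Fin k => g.support),
        (∏ j, WittVector.teichmuller p (coeff (t j) g)) * ∏ i, powerSum χ (∑ j, t j i) := by
      simp_rw [hT]
      exact sum_pow_sum_mul_prod_pow g.support
        (fun v => WittVector.teichmuller p (coeff v g)) χ k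
    rw [hexpand]
    refine dvd_sum fun t ht => dvd_mul_of_dvd_right ?_ _
    by_cases hcol : ∀ i, 0 < ∑ j, t j i ∧ q - 1 ∣ ∑ j, t j i
    · refine absurd ?_ hkμ.not_ge
      have hle := latticeThreshold_mul_le_of_forall_mem (hΔ ▸ convex_convexHull ℝ _) hk
        (by omega) t (fun j => hexponent _ (Fintype.mem_piFinset.1 ht j))
        (fun i => (hcol i).1) (fun i => (hcol i).2)
      rwa [ENNReal.natCast_sub, Nat.cast_one, ← hμ] at hle
    · push Not at hcol
      obtain ⟨i, hi⟩ := hcol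
      exact (hF ▸ FiniteField.natCast_card_dvd_powerSum χ hχ (hF ▸ hi)).trans
        (dvd_prod_of_mem _ (mem_univ i))
  refine ⟨hdvd, fun k hk hndvd => ?_⟩
  by_contra! hlt
  rw [lt_min_iff] at hlt
  exact hndvd (hdvd k hk hlt.1 (by exact_mod_cast hlt.2))

/-- **Lemma 5.2.** Let `q = p^r` be a prime power, `n ≥ 1`, `f = (f₁,…,fₙ)` a polynomial
vector over `𝔽_q`, `K/𝔽_q` an extension of degree `n` with basis `e₁,…,eₙ` (given by `b`),
and `g = f₁e₁ + ⋯ + fₙeₙ ∈ K[x₁,…,xₙ]`.  `Δ` is the Newton polytope of `f`, and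
`μ ∈ ℝ≥0∞` is the infimum of the set of positive real dilation factors `k` such that
`kΔ` contains a lattice point with all coordinates strictly positive (`μ = ∞` when no
such `k` exists).  `T x` denotes the coefficientwise Teichmüller lift `ĝ` of `g`
evaluated at `(τ(x₁),…,τ(xₙ))` in `W(K)`.  Then for every positive integer `k` with
`k < μ·(q-1)` and `k < q`, the sum `∑_{x ∈ 𝔽_qⁿ} ĝ(τ(x₁),…,τ(xₙ))^k` is divisible by
`p·k` in `W(K)`; consequently any positive `k` for which this divisibility fails
satisfies `k ≥ min {μ·(q-1), q}`, i.e. `U(g) ≥ min {μ_f(q-1), q}`. -/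
theorem U_g_ge_min_polytope (p r q : ℕ) [Fact p.Prime] (hr : 0 < r) (hq : q = p ^ r)
    (F : Type) [Field F] [Fintype F] [CharP F p] (hF : Fintype.card F = q)
    (n : ℕ) (hn : 1 ≤ n)
    (K : Type) [Field K] [CharP K p] [Algebra F K] (hK : Module.finrank F K = n)
    (b : Module.Basis (Fin n) F K)
    (f : Fin n → MvPolynomial (Fin n) F)
    (g : MvPolynomial (Fin n) K)
    (hg : g = ∑ i, MvPolynomial.C (b i) * MvPolynomial.map (algebraMap F K) (f i))
    (Δ : Set (Fin n → ℝ))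
    (hΔ : Δ = convexHull ℝ
      ({0} ∪ ⋃ i, (fun v : Fin n →₀ ℕ => fun j => (v j : ℝ)) '' ((f i).support : Set (Fin n →₀ ℕ))))
    (μ : ℝ≥0∞)
    (hμ : μ = sInf {k : ℝ≥0∞ | 0 < k ∧ k ≠ ⊤ ∧
      ∃ v : Fin n → ℤ, (∀ j, 0 < v j) ∧ (fun j => (v j : ℝ)) ∈ k.toReal • Δ})
    (T : (Fin n → F) → WittVector p K)
    (hT : ∀ x, T x = ∑ v ∈ g.support,
      WittVector.teichmuller p (MvPolynomial.coeff v g) *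
        ∏ i, WittVector.teichmuller p (algebraMap F K (x i)) ^ v i) :
    (∀ k : ℕ, 0 < k → (k : ℝ≥0∞) < μ * ((q : ℝ≥0∞) - 1) → k < q →
      ((p * k : ℕ) : WittVector p K) ∣ ∑ x : Fin n → F, T x ^ k) ∧
    (∀ k : ℕ, 0 < k → ¬ ((p * k : ℕ) : WittVector p K) ∣ (∑ x : Fin n → F, T x ^ k) →
      min (μ * ((q : ℝ≥0∞) - 1)) (q : ℝ≥0∞) ≤ (k : ℝ≥0∞)) :=
  U_g_ge_min_polytope_general p r q hq F hF n K b f g hg Δ hΔ μ hμ T hT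
end
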